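/- arXiv:1409.3864 — 5 statements merged into one kernel-verified Lean document; each statement's English description precedes it below -/
import Mathlib

section
/- For any permutation π of {1,...,k} and any integer r ≥ 1, the number of sequences (s_1,...,s_r,t_1,...,t_r) with 1 ≤ s_i < t_i ≤ k for all i, t_1 ≤ t_2 ≤ ... ≤ t_r, and π = (s_1 t_1)(s_2 t_2)⋯(s_r t_r), is at most 1_{r ≥ |π|} · k^(2r-2)/2^(r-1), where |π| denotes the minimal number of transpositions needed to write π. -/
/-- Minimal number of transpositions needed to write a permutation. -/
noncomputable def transLen {α : Type*} [DecidableEq α] (π : Equiv.Perm α) : ℕ :=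
  sInf {r | ∃ l : List (Equiv.Perm α), l.length = r ∧ (∀ τ ∈ l, τ.IsSwap) ∧ l.prod = π}

/-- Number of sequences `(s₁,…,s_r,t₁,…,t_r)` with `sᵢ < tᵢ`, `t₁ ≤ ⋯ ≤ t_r` and
`π = (s₁ t₁)⋯(s_r t_r)`. -/
noncomputable def factorCount (k r : ℕ) (π : Equiv.Perm (Fin k)) : ℕ :=
  Nat.card {p : Fin r → Fin k × Fin k //
    (∀ i, (p i).1 < (p i).2) ∧
    (∀ i j : Fin r, i ≤ j → (p i).2 ≤ (p j).2) ∧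
    (List.ofFn fun i => Equiv.swap (p i).1 (p i).2).prod = π}

/-!
A factorization `π = (s₁ t₁)⋯(s_r t_r)` is determined by its last `r - 1` transpositions, since
the first one equals `π` times the inverse of their product, and a transposition `(s t)` with
`s < t` determines the pair `(s, t)`. Hence there are at most `(k choose 2) ^ (r - 1)`
factorizations, and `k choose 2 ≤ k² / 2`. If `r < |π|` there are none.
-/

open Equiv

lemma Equiv.swap_eq_swap_of_lt {α : Type*} [LinearOrder α] {a b c d : α} (hab : a < b)
    (hcd : c < d) (h : swap a b = swap c d) : (a, b) = (c, d) := by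
  have ha : swap c d a = b := by rw [← h, swap_apply_left]
  rcases eq_or_ne a c with rfl | hac
  · rw [swap_apply_left] at ha
    rw [ha]
  rcases eq_or_ne a d with rfl | had
  · rw [swap_apply_right] at ha
    subst ha
    exact absurd hcd hab.asymm
  · rw [swap_apply_of_ne_of_ne hac had] at ha
    exact absurd ha hab.ne

lemma Fin.card_subtype_fst_lt_snd (k : ℕ) :
    Fintype.card {p : Fin k × Fin k // p.1 < p.2} = k.choose 2 := by
  rw [Fintype.card_subtype, Fintype.card_product_filter_lt, Fintype.card_fin]

lemma factorCount_succ_le (k m : ℕ) (π : Perm (Fin k)) :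
    factorCount k (m + 1) π ≤ k.choose 2 ^ m := by
  refine (Nat.card_le_card_of_injective (β := Fin m → {p : Fin k × Fin k // p.1 < p.2})
    (fun p i => ⟨p.1 i.succ, p.2.1 i.succ⟩) ?_).trans_eq (by simp [Fin.card_subtype_fst_lt_snd])
  rintro ⟨p, hp_lt, _, hp_prod⟩ ⟨q, hq_lt, _, hq_prod⟩ h_eq
  have h_tail : ∀ i : Fin m, p i.succ = q i.succ := fun i =>
    congrArg Subtype.val (congrFun h_eq i)
  have h_head : swap (p 0).1 (p 0).2 = swap (q 0).1 (q 0).2 := by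
    rw [List.ofFn_succ, List.prod_cons] at hp_prod hq_prod
    simp only [h_tail] at hp_prod
    exact mul_right_cancel (hp_prod.trans hq_prod.symm)
  have h_head := swap_eq_swap_of_lt (hp_lt 0) (hq_lt 0) h_head
  exact Subtype.ext (funext fun i => Fin.cases h_head h_tail i)

lemma factorCount_le (k r : ℕ) (π : Perm (Fin k)) :
    factorCount k r π ≤ k.choose 2 ^ (r - 1) := by
  cases r with
  | zero => exact Finite.card_le_one_iff_subsingleton.mpr inferInstance
  | succ m => exact factorCount_succ_le k m π

lemma transLen_le_of_factorCount_ne_zero {k r : ℕ} {π : Perm (Fin k)}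
    (h : factorCount k r π ≠ 0) : transLen π ≤ r := by
  obtain ⟨⟨p, hp_lt, -, hp_prod⟩⟩ := Nat.card_ne_zero.mp h |>.1
  refine Nat.sInf_le ⟨List.ofFn fun i => swap (p i).1 (p i).2, List.length_ofFn, ?_, hp_prod⟩
  simp only [List.mem_ofFn, forall_exists_index]
  rintro τ i rfl
  exact ⟨(p i).1, (p i).2, (hp_lt i).ne, rfl⟩

theorem stmt0_general (k r : ℕ) (π : Equiv.Perm (Fin k)) :
    (factorCount k r π : ℝ) ≤
      (if transLen π ≤ r then 1 else 0) * (k : ℝ) ^ (2 * r - 2) / 2 ^ (r - 1) := by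
  by_cases h : transLen π ≤ r
  · rw [if_pos h, one_mul, show 2 * r - 2 = 2 * (r - 1) by omega, pow_mul, ← div_pow]
    calc (factorCount k r π : ℝ) ≤ (k.choose 2 : ℝ) ^ (r - 1) := by
          exact_mod_cast factorCount_le k r π
      _ ≤ ((k : ℝ) ^ 2 / 2) ^ (r - 1) := by
          gcongr
          simpa using Nat.choose_le_pow_div (α := ℝ) 2 k
  · have h_zero : factorCount k r π = 0 :=
      not_imp_comm.mp transLen_le_of_factorCount_ne_zero h
    simp [h, h_zero]

theorem stmt0 (k r : ℕ) (hr : 1 ≤ r) (π : Equiv.Perm (Fin k)) :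
    (factorCount k r π : ℝ) ≤
      (if transLen π ≤ r then 1 else 0) * (k : ℝ) ^ (2 * r - 2) / 2 ^ (r - 1) :=
  stmt0_general k r π
end

section
/- A permutation σ of {1,...,k} with |σ| = q (minimal number of transpositions q) has a factorization σ = (s_1 t_1)⋯(s_q t_q) with s_i < t_i for all i and t_1 < t_2 < ... < t_q. -/
open Equiv Equiv.Perm

section TransLen

variable {α : Type*} [DecidableEq α]

theorem transLen_prod_le_length (l : List (Perm α)) (hl : ∀ τ ∈ l, τ.IsSwap) :
    transLen l.prod ≤ l.length :=
  Nat.sInf_le ⟨l, rfl, hl, rfl⟩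

variable [Fintype α]

theorem exists_list_length_eq_transLen (σ : Perm α) :
    ∃ l : List (Perm α), l.length = transLen σ ∧ (∀ τ ∈ l, τ.IsSwap) ∧ l.prod = σ := by
  obtain ⟨l, hprod, hswap⟩ := (truncSwapFactors σ).out
  exact Nat.sInf_mem
    (s := {r | ∃ l : List (Perm α), l.length = r ∧ (∀ τ ∈ l, τ.IsSwap) ∧ l.prod = σ})
    ⟨l.length, l, rfl, hswap, hprod⟩

theorem transLen_eq_zero_iff {σ : Perm α} : transLen σ = 0 ↔ σ = 1 := by
  constructor
  · intro h
    obtain ⟨l, hlen, -, rfl⟩ := exists_list_length_eq_transLen σ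
    rw [List.length_eq_zero_iff.1 (hlen.trans h), List.prod_nil]
  · rintro rfl
    exact Nat.le_zero.1 (transLen_prod_le_length [] (by simp))

theorem transLen_swap_mul_le {τ : Perm α} (hτ : τ.IsSwap) (π : Perm α) :
    transLen (τ * π) ≤ transLen π + 1 := by
  obtain ⟨l, hlen, hl, rfl⟩ := exists_list_length_eq_transLen π
  rw [← hlen, ← List.prod_cons, ← List.length_cons]
  exact transLen_prod_le_length _ (by simpa [hτ] using hl)

theorem transLen_mul_swap_le (π : Perm α) {τ : Perm α} (hτ : τ.IsSwap) :
    transLen (π * τ) ≤ transLen π + 1 := by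
  obtain ⟨l, hlen, hl, rfl⟩ := exists_list_length_eq_transLen π
  rw [← hlen, ← List.prod_concat, ← List.length_concat]
  exact transLen_prod_le_length _ (by simpa [or_imp, forall_and, hτ] using hl)

end TransLen

section FixingPoint

variable {α : Type*} [DecidableEq α]

theorem swap_mul_swap_eq_swap_mul_swap {a c t : α} (hac : a ≠ c) (hat : a ≠ t) :
    swap c t * swap a t = swap c a * swap c t := by
  rw [mul_swap_eq_swap_mul, swap_apply_of_ne_of_ne hac hat, swap_apply_right, swap_comm]

theorem Equiv.Perm.IsSwap.exists_eq_swap_of_apply_ne {τ : Perm α} (hτ : τ.IsSwap) {t : α}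
    (ht : τ t ≠ t) : ∃ c, c ≠ t ∧ τ = swap c t := by
  obtain ⟨x, y, hxy, rfl⟩ := hτ
  rcases eq_or_ne t x with rfl | hx
  · exact ⟨y, hxy.symm, swap_comm _ _⟩
  rcases eq_or_ne t y with rfl | hy
  · exact ⟨x, hxy, rfl⟩
  exact absurd (swap_apply_of_ne_of_ne hx hy) ht

variable [Fintype α]

/-- The trailing factor `swap a t` is a genuine swap only when `a ≠ t` (`swap t t = 1`), hence the
`if` in the length count. -/
theorem exists_swap_mul_eq_mul_swap {t : α} {τ ρ₀ : Perm α} (hτ : τ.IsSwap) (hρ₀ : ρ₀ t = t)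
    (a₀ : α) : ∃ (ρ : Perm α) (a : α), ρ t = t ∧ τ * (ρ₀ * swap a₀ t) = ρ * swap a t ∧
      transLen ρ + (if a = t then 0 else 1) ≤ transLen ρ₀ + (if a₀ = t then 0 else 1) + 1 := by
  by_cases hτt : τ t = t
  · refine ⟨τ * ρ₀, a₀, by simp [hρ₀, hτt], (mul_assoc _ _ _).symm, ?_⟩
    have := transLen_swap_mul_le hτ ρ₀
    omega
  obtain ⟨c, hct, rfl⟩ := hτ.exists_eq_swap_of_apply_ne hτt
  obtain ⟨c', rfl⟩ : ∃ c', c = ρ₀ c' := ⟨ρ₀⁻¹ c, by simp⟩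
  have hc't : c' ≠ t := by
    rintro rfl
    exact hct hρ₀
  have hconj : swap (ρ₀ c') t * ρ₀ = ρ₀ * swap c' t := by
    rw [mul_swap_eq_swap_mul, hρ₀]
  rw [← mul_assoc, hconj, mul_assoc]
  rcases eq_or_ne a₀ t with rfl | ha₀t
  · exact ⟨ρ₀, c', hρ₀, by rw [swap_self, ← Perm.one_def, mul_one], by simp [hc't]⟩
  rcases eq_or_ne a₀ c' with rfl | ha₀c'
  · exact ⟨ρ₀, t, hρ₀, by rw [swap_mul_self, swap_self, ← Perm.one_def], by split_ifs <;> omega⟩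
  refine ⟨ρ₀ * swap c' a₀, c', ?_, ?_, ?_⟩
  · simp [swap_apply_of_ne_of_ne hc't.symm ha₀t.symm, hρ₀]
  · rw [swap_mul_swap_eq_swap_mul_swap ha₀c' ha₀t, mul_assoc]
  · have := transLen_mul_swap_le ρ₀ ⟨c', a₀, ha₀c'.symm, rfl⟩
    simp only [if_neg hc't, if_neg ha₀t]
    omega

theorem exists_prod_eq_mul_swap (t : α) (l : List (Perm α)) (hl : ∀ τ ∈ l, τ.IsSwap) :
    ∃ (ρ : Perm α) (a : α), ρ t = t ∧ l.prod = ρ * swap a t ∧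
      transLen ρ + (if a = t then 0 else 1) ≤ l.length := by
  induction l with
  | nil => exact ⟨1, t, rfl, by rw [swap_self, ← Perm.one_def, mul_one, List.prod_nil],
      by simp [transLen_eq_zero_iff]⟩
  | cons τ l ih =>
    obtain ⟨ρ₀, a₀, hρ₀, hprod, hlen⟩ := ih fun τ' h => hl τ' (List.mem_cons_of_mem _ h)
    obtain ⟨ρ, a, hρ, hprod', hlen'⟩ := exists_swap_mul_eq_mul_swap (hl τ (by simp)) hρ₀ a₀
    refine ⟨ρ, a, hρ, by rw [List.prod_cons, hprod, hprod'], ?_⟩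
    rw [List.length_cons]
    omega

theorem exists_eq_mul_swap_and_transLen_add_one {σ : Perm α} {t : α} (ht : σ t ≠ t) :
    ∃ (ρ : Perm α) (a : α), ρ t = t ∧ σ = ρ * swap a t ∧ transLen ρ + 1 = transLen σ := by
  obtain ⟨l, hlen, hl, rfl⟩ := exists_list_length_eq_transLen σ
  obtain ⟨ρ, a, hρ, hprod, hle⟩ := exists_prod_eq_mul_swap t l hl
  have hat : a ≠ t := by
    rintro rfl
    simp [hprod, hρ] at ht
  refine ⟨ρ, a, hρ, hprod, le_antisymm ?_ ?_⟩
  · simpa [hat, hlen] using hle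
  · rw [hprod]
    exact transLen_mul_swap_le ρ ⟨a, t, hat, rfl⟩

end FixingPoint

theorem Fin.strictMono_snoc {β : Type*} [Preorder β] {n : ℕ} {f : Fin n → β} {b : β}
    (hf : StrictMono f) (hb : ∀ i, f i < b) : StrictMono (Fin.snoc f b : Fin (n + 1) → β) := by
  intro i j hij
  induction j using Fin.lastCases with
  | last =>
    induction i using Fin.lastCases with
    | last => exact absurd hij (lt_irrefl _)
    | cast i => simpa using hb i
  | cast j =>
    induction i using Fin.lastCases with
    | last => exact absurd hij (not_lt.2 (Fin.le_last _))
    | cast i => simpa using hf (Fin.castSucc_lt_castSucc_iff.1 hij)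

section Ordered

variable {α : Type*} [LinearOrder α] [Fintype α]

theorem exists_swap_factorization_of_transLen_eq (q : ℕ) :
    ∀ σ : Perm α, transLen σ = q → ∃ p : Fin q → α × α,
      (∀ i, (p i).1 < (p i).2) ∧ StrictMono (fun i => (p i).2) ∧ (∀ i, (p i).2 ∈ σ.support) ∧
      (List.ofFn fun i => swap (p i).1 (p i).2).prod = σ := by
  induction q with
  | zero =>
    intro σ hσ
    rw [transLen_eq_zero_iff.1 hσ]
    exact ⟨Fin.elim0, fun i => i.elim0, fun i => i.elim0, fun i => i.elim0, by simp⟩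
  | succ q ih =>
    intro σ hσ
    have hσ1 : σ.support.Nonempty := by
      rw [Finset.nonempty_iff_ne_empty, Ne, support_eq_empty_iff, ← transLen_eq_zero_iff]
      omega
    obtain ⟨t, ht, htmax⟩ : ∃ t ∈ σ.support, ∀ x ∈ σ.support, x ≤ t :=
      ⟨_, σ.support.max'_mem hσ1, fun x hx => σ.support.le_max' x hx⟩
    obtain ⟨ρ, a, hρt, rfl, hlen⟩ := exists_eq_mul_swap_and_transLen_add_one (mem_support.1 ht)
    obtain ⟨p, hlt, hmono, hsupp, hprod⟩ := ih ρ (by omega)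
    have hat : a ≠ t := by
      rintro rfl
      simp [hρt] at ht
    have ha : a ∈ (ρ * swap a t).support := by simpa [hρt] using hat.symm
    have hsub : ρ.support ⊆ (ρ * swap a t).support := by
      intro x hx
      have := support_mul_le (ρ * swap a t) (swap a t) (by rwa [mul_swap_mul_self])
      rw [support_swap hat] at this
      simp only [Finset.sup_eq_union, Finset.mem_union, Finset.mem_insert,
        Finset.mem_singleton] at this
      rcases this with h | rfl | rfl <;> assumption
    have hρlt : ∀ x ∈ ρ.support, x < t := fun x hx =>
      (htmax x (hsub hx)).lt_of_ne fun h => mem_support.1 hx (h ▸ hρt)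
    refine ⟨Fin.snoc p (a, t), ?_, ?_, ?_, ?_⟩
    · intro i
      induction i using Fin.lastCases with
      | last => simpa using (htmax a ha).lt_of_ne hat
      | cast i => simpa using hlt i
    · change StrictMono (Prod.snd ∘ Fin.snoc p (a, t))
      rw [Fin.comp_snoc]
      exact Fin.strictMono_snoc hmono fun i => hρlt _ (hsupp i)
    · intro i
      induction i using Fin.lastCases with
      | last => simpa using ht
      | cast i => simpa using hsub (hsupp i)
    · rw [List.ofFn_succ', List.prod_concat]
      simp [hprod]

end Ordered

theorem stmt1 (k q : ℕ) (σ : Equiv.Perm (Fin k)) (hσ : transLen σ = q) :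
    ∃ p : Fin q → Fin k × Fin k,
      (∀ i, (p i).1 < (p i).2) ∧
      StrictMono (fun i => (p i).2) ∧
      (List.ofFn fun i => Equiv.swap (p i).1 (p i).2).prod = σ := by
  obtain ⟨p, hlt, hmono, -, hprod⟩ := exists_swap_factorization_of_transLen_eq q σ hσ
  exact ⟨p, hlt, hmono, hprod⟩
end

section
/- Let k ≥ 1, let c be the k-cycle (1 2 ⋯ k) in S_k, let α ∈ S_k be fixed, and let q ∈ {0,...,k-1}. Then the number of permutations φ ∈ S_k with |c^{-1} φ^{-1} α^{-1} c φ| = q is at most k^{4q}·k/(2q)!, where |·| is the transposition length. -/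
/-- The `k`-cycle `(1 2 ⋯ k)`, sending `i` to `i+1` mod `k`. -/
noncomputable def fullCycle (k : ℕ) : Equiv.Perm (Fin k) := finRotate k

/-!
Put `π = c⁻¹ φ⁻¹ α⁻¹ c φ`. A product of `q` transpositions moves at most `2q` points, and every
point `x` fixed by `π` gives the recurrence `φ (c x) = α⁻¹ (c (φ x))`. Since `c` has a single
orbit, `φ` is therefore determined by a set `T ⊇ supp π` of size `m = min (2q) k`, the values of
`φ ∘ c` on `T`, and `φ 0`; there are at most `C(k, m) k^m k` such data, and
`C(k, m) k^m ≤ k^(4q) / (2q)!`.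
-/

open Equiv Finset

namespace Equiv.Perm

variable {α : Type*}

theorem funext_of_orbit {γ : Type*} {c : Perm α} {x₀ : α}
    (horbit : ∀ y, ∃ j : ℕ, (c ^ j) x₀ = y)
    {f g : α → γ} (h₀ : f x₀ = g x₀) (hstep : ∀ x, f x = g x → f (c x) = g (c x)) : f = g := by
  have hpow : ∀ j : ℕ, f ((c ^ j) x₀) = g ((c ^ j) x₀) := by
    intro j
    induction j with
    | zero => simpa using h₀
    | succ j ih =>
      rw [pow_succ', mul_apply]
      exact hstep _ ih
  funext y
  obtain ⟨j, rfl⟩ := horbit y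
  exact hpow j

theorem apply_apply_eq_of_mul_apply_eq_self {c β φ : Perm α} {x : α}
    (hx : (c⁻¹ * φ⁻¹ * β * c * φ) x = x) : φ (c x) = β (c (φ x)) := by
  have h := congrArg (fun y => φ (c y)) hx
  simpa [mul_apply] using h.symm

theorem eq_of_recurrence_off {c β φ ψ : Perm α} {x₀ : α}
    (horbit : ∀ y, ∃ j : ℕ, (c ^ j) x₀ = y) {T : Finset α}
    (hφ : ∀ x ∉ T, φ (c x) = β (c (φ x))) (hψ : ∀ x ∉ T, ψ (c x) = β (c (ψ x)))
    (h₀ : φ x₀ = ψ x₀) (hT : ∀ x ∈ T, φ (c x) = ψ (c x)) : φ = ψ := by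
  refine DFunLike.coe_injective (funext_of_orbit horbit h₀ fun x hx => ?_)
  by_cases hxT : x ∈ T
  · exact hT x hxT
  · rw [hφ x hxT, hψ x hxT, hx]

variable [DecidableEq α] [Fintype α]

theorem card_support_prod_le_two_mul_length {l : List (Perm α)} (hl : ∀ τ ∈ l, τ.IsSwap) :
    #l.prod.support ≤ 2 * l.length := by
  induction l with
  | nil => simp
  | cons τ l ih =>
    rw [List.prod_cons, List.length_cons]
    have hτ : #τ.support = 2 := card_support_eq_two.mpr (hl τ List.mem_cons_self)
    have hrest := ih fun σ hσ => hl σ (List.mem_cons_of_mem τ hσ)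
    calc #(τ * l.prod).support ≤ #(τ.support ∪ l.prod.support) := card_le_card (support_mul_le _ _)
      _ ≤ #τ.support + #l.prod.support := card_union_le _ _
      _ ≤ 2 * (l.length + 1) := by omega

theorem card_support_le_two_mul_transLen (π : Perm α) : #π.support ≤ 2 * transLen π := by
  obtain ⟨l, hprod, hswap⟩ := (truncSwapFactors π).out
  obtain ⟨l', hlen, hswap', hprod'⟩ : transLen π ∈
      {r | ∃ l' : List (Perm α), l'.length = r ∧ (∀ τ ∈ l', τ.IsSwap) ∧ l'.prod = π} :=
    Nat.sInf_mem ⟨l.length, l, rfl, hswap, hprod⟩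
  rw [← hlen, ← hprod']
  exact card_support_prod_le_two_mul_length hswap'

theorem card_recurrence_off_le (c β : Perm α) {x₀ : α} (horbit : ∀ y, ∃ j : ℕ, (c ^ j) x₀ = y)
    (T : Finset α) :
    #{φ : Perm α | ∀ x ∉ T, φ (c x) = β (c (φ x))} ≤ Fintype.card α ^ #T * Fintype.card α := by
  have hinj : Set.InjOn (fun φ : Perm α => ((fun x : T => φ (c x)), φ x₀))
      ({φ : Perm α | ∀ x ∉ T, φ (c x) = β (c (φ x))} : Finset (Perm α)) := by
    intro φ hφ ψ hψ h
    simp only [Prod.mk.injEq, funext_iff, Subtype.forall] at h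
    exact eq_of_recurrence_off horbit (mem_filter.1 hφ).2 (mem_filter.1 hψ).2 h.2 h.1
  simpa using card_le_card_of_injOn _ (fun _ _ => mem_coe.2 (mem_univ _)) hinj

theorem card_of_card_support_le (c β : Perm α) {x₀ : α} (horbit : ∀ y, ∃ j : ℕ, (c ^ j) x₀ = y)
    {m : ℕ} (hm : m ≤ Fintype.card α) :
    Nat.card {φ : Perm α // #(c⁻¹ * φ⁻¹ * β * c * φ).support ≤ m} ≤
      (Fintype.card α).choose m * (Fintype.card α ^ m * Fintype.card α) := by
  rw [Nat.card_eq_fintype_card, Fintype.card_subtype]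
  calc #{φ : Perm α | #(c⁻¹ * φ⁻¹ * β * c * φ).support ≤ m}
      ≤ #((powersetCard m univ).biUnion
          fun T => {φ : Perm α | ∀ x ∉ T, φ (c x) = β (c (φ x))}) := by
        refine card_le_card fun φ hφ => ?_
        obtain ⟨T, hsupp, hT⟩ := exists_superset_card_eq (mem_filter.1 hφ).2 hm
        refine mem_biUnion.2
          ⟨T, mem_powersetCard.2 ⟨subset_univ T, hT⟩, mem_filter.2 ⟨mem_univ φ, ?_⟩⟩
        exact fun x hx =>
          apply_apply_eq_of_mul_apply_eq_self (notMem_support.1 fun h => hx (hsupp h))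
    _ ≤ ∑ T ∈ powersetCard m univ, #{φ : Perm α | ∀ x ∉ T, φ (c x) = β (c (φ x))} :=
        card_biUnion_le
    _ ≤ ∑ T ∈ powersetCard m (univ : Finset α), Fintype.card α ^ m * Fintype.card α :=
        sum_le_sum fun T hT => (mem_powersetCard.1 hT).2 ▸ card_recurrence_off_le c β horbit T
    _ = (Fintype.card α).choose m * (Fintype.card α ^ m * Fintype.card α) := by
        rw [sum_const, card_powersetCard, card_univ, smul_eq_mul]

end Equiv.Perm

open Fin.NatCast in
theorem exists_pow_finRotate_apply_eq {k : ℕ} (hk : 1 ≤ k) (y : Fin k) :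
    ∃ j : ℕ, (finRotate k ^ j) ⟨0, hk⟩ = y := by
  obtain ⟨n, rfl⟩ := Nat.exists_eq_add_of_le' hk
  have hpow : ∀ j : ℕ, (finRotate (n + 1) ^ j) 0 = j := by
    intro j
    induction j with
    | zero => rfl
    | succ j ih => rw [pow_succ', Perm.mul_apply, ih, finRotate_apply, Nat.cast_succ]
  exact ⟨y, (hpow y).trans (Fin.cast_val_eq_self y)⟩

theorem Nat.factorial_mul_pow_self_le {k n : ℕ} (hkn : k ≤ n) (hn : n ≤ k ^ 2) :
    n.factorial * k ^ k ≤ k ^ (2 * n) := by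
  have hsplit : k.factorial * n.descFactorial (n - k) = n.factorial := by
    simpa [Nat.sub_sub_self hkn] using Nat.factorial_mul_descFactorial (Nat.sub_le n k)
  calc n.factorial * k ^ k = k.factorial * n.descFactorial (n - k) * k ^ k := by rw [hsplit]
    _ ≤ k ^ k * (k ^ 2) ^ (n - k) * k ^ k := by
        gcongr
        · exact Nat.factorial_le_pow k
        · exact (Nat.descFactorial_le_pow n _).trans (Nat.pow_le_pow_left hn _)
    _ = k ^ (2 * n) := by
        rw [← pow_mul, ← pow_add, ← pow_add]
        congr 1
        omega

theorem Nat.choose_min_mul_pow_le {k n : ℕ} (hn : n ≤ k ^ 2) :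
    (k.choose (min n k) * k ^ min n k : ℝ) ≤ k ^ (2 * n) / n.factorial := by
  rcases le_total n k with hnk | hkn
  · rw [min_eq_left hnk, two_mul, pow_add, mul_div_right_comm]
    gcongr
    exact Nat.choose_le_pow_div n k
  · rw [min_eq_right hkn, Nat.choose_self, Nat.cast_one, one_mul, le_div_iff₀ (by positivity),
      mul_comm]
    exact_mod_cast Nat.factorial_mul_pow_self_le hkn hn

theorem stmt4 (k : ℕ) (hk : 1 ≤ k) (α : Equiv.Perm (Fin k)) (q : ℕ) (hq : q ≤ k - 1) :
    (Nat.card {φ : Equiv.Perm (Fin k) //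
        transLen ((fullCycle k)⁻¹ * φ⁻¹ * α⁻¹ * (fullCycle k) * φ) = q} : ℝ) ≤
      (k : ℝ) ^ (4 * q) * k / (Nat.factorial (2 * q)) := by
  have horbit : ∀ y, ∃ j : ℕ, (fullCycle k ^ j) ⟨0, hk⟩ = y := exists_pow_finRotate_apply_eq hk
  have hsupp : ∀ φ : Perm (Fin k),
      transLen ((fullCycle k)⁻¹ * φ⁻¹ * α⁻¹ * (fullCycle k) * φ) = q →
      #((fullCycle k)⁻¹ * φ⁻¹ * α⁻¹ * (fullCycle k) * φ).support ≤ min (2 * q) k := fun φ hφ =>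
    le_min (hφ ▸ Perm.card_support_le_two_mul_transLen _)
      ((card_le_univ _).trans (Fintype.card_fin k).le)
  have hcount := Perm.card_of_card_support_le (fullCycle k) α⁻¹ horbit
    (m := min (2 * q) k) (by simp)
  rw [Fintype.card_fin] at hcount
  have h2q : 2 * q ≤ k ^ 2 := by
    have : q + 1 ≤ k := by omega
    nlinarith
  calc (Nat.card {φ : Perm (Fin k) //
        transLen ((fullCycle k)⁻¹ * φ⁻¹ * α⁻¹ * (fullCycle k) * φ) = q} : ℝ)
      ≤ Nat.card {φ : Perm (Fin k) //
          #((fullCycle k)⁻¹ * φ⁻¹ * α⁻¹ * (fullCycle k) * φ).support ≤ min (2 * q) k} := by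
        exact_mod_cast Nat.card_le_card_of_injective _ (Subtype.impEmbedding _ _ hsupp).injective
    _ ≤ k.choose (min (2 * q) k) * k ^ min (2 * q) k * k := by
        rw [mul_assoc]
        exact_mod_cast hcount
    _ ≤ (k : ℝ) ^ (4 * q) * k / (Nat.factorial (2 * q)) := by
        rw [mul_div_right_comm, show 4 * q = 2 * (2 * q) by ring]
        gcongr
        exact Nat.choose_min_mul_pow_le h2q
end

section
/- Suppose k^2 < 2n and define Wg as the series Wg(π) = n^{-k} Σ_{r≥0} (-1)^r c_r(π)/n^r with c_r(π) counting ordered factorizations of π into r transpositions (s_1 t_1)⋯(s_r t_r) with s_i < t_i and t_1 ≤ ⋯ ≤ t_r. Then |Wg(id)| ≤ 1/n^k + (k^2/(2 n^{k+2})) · 1/(1 - k^4/(4n^2)). -/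
/-- The Weingarten function `Wg(π) = n^{-k} Σ_{r≥0} (-1)^r c_r(π)/n^r`. -/
noncomputable def Wg (n k : ℕ) (π : Equiv.Perm (Fin k)) : ℝ :=
  (1 / (n : ℝ) ^ k) * ∑' r : ℕ, (-1 : ℝ) ^ r * (factorCount k r π : ℝ) / (n : ℝ) ^ r

/-!
Odd factorizations of the identity do not exist, and a factorization into `m + 1` transpositions
is determined by its last `m` factors, so `c_{2j+2}(id) ≤ (k²/2)^{2j+1}` while `c_0(id) = 1`.
Hence `|n^k Wg(id)| ≤ 1 + Σ_j (k²/2)^{2j+1} / n^{2j+2}`, a geometric series of ratio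
`k⁴/(4n²) < 1`.
-/

lemma Equiv.eq_of_swap_eq_swap {α : Type*} [LinearOrder α] {a b c d : α} (hab : a < b)
    (hcd : c < d) (h : swap a b = swap c d) : a = c ∧ b = d := by
  have ha : swap c d a ≠ a := by rw [← h, swap_apply_left]; exact hab.ne'
  have hb : swap c d b ≠ b := by rw [← h, swap_apply_right]; exact hab.ne
  rw [swap_apply_ne_self_iff] at ha hb
  grind

lemma factorCount_zero_one (k : ℕ) : factorCount k 0 1 = 1 := by
  rw [factorCount, Nat.card_eq_one_iff_unique]
  refine ⟨⟨fun p q => Subtype.ext (funext nofun)⟩, ⟨⟨Fin.elim0, nofun, nofun, ?_⟩⟩⟩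
  simp

lemma factorCount_eq_zero_of_sign_ne {k r : ℕ} {π : Equiv.Perm (Fin k)}
    (h : Equiv.Perm.sign π ≠ (-1) ^ r) : factorCount k r π = 0 := by
  rw [factorCount, Nat.card_eq_zero, isEmpty_subtype]
  refine .inl ?_
  rintro p ⟨hlt, -, hprod⟩
  refine h ?_
  rw [← hprod, Equiv.Perm.sign_prod_list_swap, List.length_ofFn]
  simp only [List.mem_ofFn, forall_exists_index, forall_apply_eq_imp_iff]
  exact fun i => ⟨_, _, (hlt i).ne, rfl⟩

-- The first transposition is determined by `π` and the other `m`, so dropping it is injective.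
lemma factorCount_succ_le_s8 (k m : ℕ) (π : Equiv.Perm (Fin k)) :
    factorCount k (m + 1) π ≤ Nat.card {q : Fin k × Fin k // q.1 < q.2} ^ m := by
  rw [factorCount]
  refine (Nat.card_le_card_of_injective (β := Fin m → {q : Fin k × Fin k // q.1 < q.2})
    (fun p i => ⟨p.1 i.succ, p.2.1 i.succ⟩) ?_).trans_eq (by simp)
  rintro ⟨p, hp, _, hπp⟩ ⟨q, hq, _, hπq⟩ htail
  simp only [funext_iff, Subtype.mk.injEq] at htail
  have hhead : Equiv.swap (p 0).1 (p 0).2 = Equiv.swap (q 0).1 (q 0).2 := by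
    rw [List.ofFn_succ, List.prod_cons] at hπp hπq
    simp only [htail] at hπp
    exact mul_right_cancel (hπp.trans hπq.symm)
  obtain ⟨h1, h2⟩ := Equiv.eq_of_swap_eq_swap (hp 0) (hq 0) hhead
  exact Subtype.ext (funext (Fin.cases (Prod.ext h1 h2) htail))

lemma two_mul_card_lt_pairs_le (α : Type*) [LinearOrder α] [Finite α] :
    2 * Nat.card {q : α × α // q.1 < q.2} ≤ Nat.card α ^ 2 := by
  let f : {q : α × α // q.1 < q.2} ⊕ {q : α × α // q.1 < q.2} → α × α :=
    Sum.elim Subtype.val (Prod.swap ∘ Subtype.val)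
  have hf : f.Injective := by
    rintro (⟨q, hq⟩ | ⟨q, hq⟩) (⟨q', hq'⟩ | ⟨q', hq'⟩) h <;>
      simp only [f, Sum.elim_inl, Sum.elim_inr, Function.comp_apply, Prod.ext_iff,
        Prod.fst_swap, Prod.snd_swap] at h ⊢ <;> grind
  calc 2 * Nat.card {q : α × α // q.1 < q.2}
      = Nat.card ({q : α × α // q.1 < q.2} ⊕ {q : α × α // q.1 < q.2}) := by
        rw [Nat.card_sum, two_mul]
    _ ≤ Nat.card (α × α) := Nat.card_le_card_of_injective f hf
    _ = Nat.card α ^ 2 := by rw [Nat.card_prod, sq]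

lemma abs_tsum_div_pow_le_of_odd_eq_zero {c : ℕ → ℝ} {A x : ℝ} (hA : 0 ≤ A) (hAx : A < x)
    (h0 : |c 0| ≤ 1) (hodd : ∀ j, c (2 * j + 1) = 0)
    (heven : ∀ j, |c (2 * j + 2)| ≤ A ^ (2 * j + 1)) :
    |∑' r, c r / x ^ r| ≤ 1 + A / x ^ 2 * (1 / (1 - A ^ 2 / x ^ 2)) := by
  have hx : 0 < x := hA.trans_lt hAx
  set q := A ^ 2 / x ^ 2
  have hq0 : 0 ≤ q := by positivity
  have hq1 : q < 1 := (div_lt_one (by positivity)).2 (pow_lt_pow_left₀ hAx hA two_ne_zero)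
  have hbound : ∀ j, |c (2 * (j + 1)) / x ^ (2 * (j + 1))| ≤ A / x ^ 2 * q ^ j := fun j => by
    calc |c (2 * (j + 1)) / x ^ (2 * (j + 1))| ≤ A ^ (2 * j + 1) / x ^ (2 * j + 2) := by
          rw [abs_div, abs_of_pos (pow_pos hx _), mul_add, mul_one]
          exact div_le_div_of_nonneg_right (heven j) (by positivity)
      _ = A / x ^ 2 * q ^ j := by rw [div_pow, ← pow_mul, ← pow_mul]; field_simp; ring
  have hgeom : Summable fun j => A / x ^ 2 * q ^ j :=
    (summable_geometric_of_lt_one hq0 hq1).mul_left _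
  have hsum : Summable fun j => c (2 * (j + 1)) / x ^ (2 * (j + 1)) :=
    hgeom.of_norm_bounded hbound
  have hsplit : ∑' r, c r / x ^ r = c 0 + ∑' j, c (2 * (j + 1)) / x ^ (2 * (j + 1)) := by
    have he : Summable fun j => c (2 * j) / x ^ (2 * j) := (summable_nat_add_iff 1).1 hsum
    have ho : (fun j => c (2 * j + 1) / x ^ (2 * j + 1)) = 0 := by ext j; simp [hodd]
    have ho' : Summable fun j => c (2 * j + 1) / x ^ (2 * j + 1) := by
      rw [ho]; exact summable_zero
    rw [← tsum_even_add_odd (f := fun r => c r / x ^ r) he ho', ho, he.tsum_eq_zero_add,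
      Pi.zero_def, tsum_zero]
    simp
  calc |∑' r, c r / x ^ r|
      ≤ |c 0| + ∑' j, A / x ^ 2 * q ^ j := by
        rw [hsplit]
        refine (abs_add_le _ _).trans (add_le_add_right ?_ _)
        exact (norm_tsum_le_tsum_norm hsum.norm).trans (hsum.norm.tsum_le_tsum hbound hgeom)
    _ ≤ 1 + A / x ^ 2 * (1 / (1 - q)) := by
        rw [tsum_mul_left, tsum_geometric_of_lt_one hq0 hq1, one_div]; linarith

lemma factorCount_succ_le_sq_div_two (k m : ℕ) (π : Equiv.Perm (Fin k)) :
    (factorCount k (m + 1) π : ℝ) ≤ ((k : ℝ) ^ 2 / 2) ^ m := by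
  have hpairs : (Nat.card {q : Fin k × Fin k // q.1 < q.2} : ℝ) ≤ (k : ℝ) ^ 2 / 2 := by
    have := two_mul_card_lt_pairs_le (Fin k)
    rw [Nat.card_fin] at this
    rw [le_div_iff₀ two_pos, mul_comm]
    exact_mod_cast this
  calc (factorCount k (m + 1) π : ℝ)
      ≤ (Nat.card {q : Fin k × Fin k // q.1 < q.2} : ℝ) ^ m := by
        exact_mod_cast factorCount_succ_le_s8 k m π
    _ ≤ ((k : ℝ) ^ 2 / 2) ^ m := by gcongr

theorem stmt8_general (n k : ℕ) (h : k ^ 2 < 2 * n) :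
    |Wg n k 1| ≤ 1 / (n : ℝ) ^ k +
      ((k : ℝ) ^ 2 / (2 * (n : ℝ) ^ (k + 2))) * (1 / (1 - (k : ℝ) ^ 4 / (4 * (n : ℝ) ^ 2))) := by
  have hkn : (k : ℝ) ^ 2 / 2 < n := by
    rw [div_lt_iff₀ two_pos, mul_comm]; exact_mod_cast h
  have hn : (0 : ℝ) < n := (by positivity : (0 : ℝ) ≤ (k : ℝ) ^ 2 / 2).trans_lt hkn
  have hseries := abs_tsum_div_pow_le_of_odd_eq_zero
    (c := fun r => (-1) ^ r * (factorCount k r 1 : ℝ)) (by positivity) hkn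
    (by simp [factorCount_zero_one])
    (fun j => by simp [factorCount_eq_zero_of_sign_ne, Odd.neg_one_pow ⟨j, rfl⟩])
    (fun j => by simpa using factorCount_succ_le_sq_div_two k (2 * j + 1) 1)
  calc |Wg n k 1|
      = 1 / (n : ℝ) ^ k * |∑' r, (-1) ^ r * (factorCount k r 1 : ℝ) / (n : ℝ) ^ r| := by
        rw [Wg, abs_mul, abs_of_pos (by positivity)]
    _ ≤ 1 / (n : ℝ) ^ k * (1 + (k : ℝ) ^ 2 / 2 / (n : ℝ) ^ 2 *
          (1 / (1 - ((k : ℝ) ^ 2 / 2) ^ 2 / (n : ℝ) ^ 2))) := by gcongr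
    _ = _ := by field_simp; ring

theorem stmt8 (n k : ℕ) (hn : 0 < n) (hk : 0 < k) (h : k ^ 2 < 2 * n) :
    |Wg n k 1| ≤ 1 / (n : ℝ) ^ k +
      ((k : ℝ) ^ 2 / (2 * (n : ℝ) ^ (k + 2))) * (1 / (1 - (k : ℝ) ^ 4 / (4 * (n : ℝ) ^ 2))) :=
  stmt8_general n k h
end

section
/- Let n, k be positive integers, let s_1,...,s_n ≥ 0, set M = max_i s_i and b^2 = (1/n) Σ_i s_i^2. Then Σ over all tuples (i_1,...,i_k) ∈ {1,...,n}^k of s_{i_1}^2 ⋯ s_{i_k}^2 · #{φ ∈ S_k : i_{φ(ℓ)} = i_ℓ for all ℓ} ≤ n k (n b^2 + k M^2)^k. -/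
/-!
The stabilizer of a tuple `i : Fin k → α` has order `∏ a, λ_a!`, where `λ_a` is the multiplicity
of `a` in `i`. Prepending a value `v` multiplies this by `λ_v + 1`, so summing over `v` with weights
`t v` produces the factor `∑ a, t a * (λ_a + 1) = ∑ a, t a + ∑ ℓ, t (i ℓ) ≤ ∑ a, t a + k * m`
whenever `t ≤ m`. By induction the weighted sum is at most `(∑ a, t a + k * m) ^ k`; take
`t = s ^ 2`, `m = M ^ 2` and absorb the factor `n * k ≥ 1`.
-/

open Finset Equiv

section

variable {α : Type*} [DecidableEq α]

theorem card_filter_cons_eq {k : ℕ} (v : α) (i : Fin k → α) (a : α) :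
    #{x | (Fin.cons v i : Fin (k + 1) → α) x = a} = #{x | i x = a} + if v = a then 1 else 0 := by
  simp only [card_filter, Fin.sum_univ_succ, Fin.cons_zero, Fin.cons_succ]
  ring

variable [Fintype α]

def fiberFactorialProd {β : Type*} [Fintype β] (f : β → α) : ℕ :=
  ∏ a, (#{b | f b = a}).factorial

theorem card_stabilizer_eq_fiberFactorialProd {β : Type*} [Fintype β] [DecidableEq β]
    (f : β → α) :
    Nat.card {φ : Perm β // ∀ b, f (φ b) = f b} = fiberFactorialProd f := by
  rw [Nat.card_eq_fintype_card]
  simp only [fiberFactorialProd, ← Fintype.card_subtype]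
  rw [← DomMulAct.stabilizer_card]
  simp only [funext_iff, Function.comp_apply]

theorem fiberFactorialProd_cons {k : ℕ} (v : α) (i : Fin k → α) :
    fiberFactorialProd (Fin.cons v i : Fin (k + 1) → α) =
      (#{x | i x = v} + 1) * fiberFactorialProd i := by
  simp only [fiberFactorialProd, card_filter_cons_eq]
  rw [← mul_prod_erase univ _ (mem_univ v),
    ← mul_prod_erase univ (fun a => (#{x | i x = a}).factorial) (mem_univ v), if_pos rfl,
    Nat.factorial_succ, mul_assoc]
  congr 2
  refine prod_congr rfl fun a ha => ?_
  rw [if_neg (ne_of_mem_erase ha).symm, add_zero]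

theorem sum_mul_card_fiber {β : Type*} [Fintype β] (t : α → ℝ) (f : β → α) :
    ∑ a, t a * #{b | f b = a} = ∑ b, t (f b) := by
  rw [← sum_fiberwise univ f]
  refine sum_congr rfl fun a _ => ?_
  rw [sum_congr rfl fun b hb => congrArg t (mem_filter.1 hb).2, sum_const, nsmul_eq_mul, mul_comm]

theorem sum_prod_mul_fiberFactorialProd_succ (t : α → ℝ) (k : ℕ) :
    ∑ i : Fin (k + 1) → α, (∏ ℓ, t (i ℓ)) * fiberFactorialProd i =
      ∑ i : Fin k → α, ((∏ ℓ, t (i ℓ)) * fiberFactorialProd i) *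
        (∑ a, t a + ∑ ℓ, t (i ℓ)) := by
  rw [← (Fin.consEquiv fun _ => α).sum_comp, Fintype.sum_prod_type, sum_comm]
  refine sum_congr rfl fun i _ => ?_
  rw [← sum_mul_card_fiber t i, ← sum_add_distrib, mul_sum]
  refine sum_congr rfl fun v _ => ?_
  change (∏ ℓ, t ((Fin.cons v i : Fin (k + 1) → α) ℓ)) *
      (fiberFactorialProd (Fin.cons v i : Fin (k + 1) → α) : ℝ) = _
  rw [Fin.prod_univ_succ, fiberFactorialProd_cons]
  simp only [Fin.cons_zero, Fin.cons_succ]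
  push_cast
  ring

theorem sum_prod_mul_fiberFactorialProd_le (t : α → ℝ) (ht : ∀ a, 0 ≤ t a) (m : ℝ)
    (hm : 0 ≤ m) (htm : ∀ a, t a ≤ m) (k : ℕ) :
    ∑ i : Fin k → α, (∏ ℓ, t (i ℓ)) * fiberFactorialProd i ≤ (∑ a, t a + k * m) ^ k := by
  induction k with
  | zero => simp [fiberFactorialProd]
  | succ k ih =>
    have hT : 0 ≤ ∑ a, t a := sum_nonneg fun a _ => ht a
    have hstep : ∀ i : Fin k → α, ∑ ℓ, t (i ℓ) ≤ (k + 1 : ℕ) * m := by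
      intro i
      have : ∑ ℓ, t (i ℓ) ≤ k * m := by
        simpa using sum_le_sum fun ℓ (_ : ℓ ∈ univ) => htm (i ℓ)
      push_cast
      linarith
    calc ∑ i : Fin (k + 1) → α, (∏ ℓ, t (i ℓ)) * fiberFactorialProd i
        ≤ ∑ i : Fin k → α, ((∏ ℓ, t (i ℓ)) * fiberFactorialProd i) *
            (∑ a, t a + (k + 1 : ℕ) * m) := by
          rw [sum_prod_mul_fiberFactorialProd_succ]
          gcongr with i
          · exact mul_nonneg (prod_nonneg fun ℓ _ => ht _) (Nat.cast_nonneg _)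
          · exact hstep i
      _ ≤ (∑ a, t a + k * m) ^ k * (∑ a, t a + (k + 1 : ℕ) * m) := by
          rw [← sum_mul]; gcongr
      _ ≤ (∑ a, t a + (k + 1 : ℕ) * m) ^ (k + 1) := by
          rw [pow_succ]; gcongr; linarith

end

theorem stmt10_general (n k : ℕ) (hn : 0 < n) (hk : 0 < k)
    (s : Fin n → ℝ) (hs : ∀ j, 0 ≤ s j)
    (M b : ℝ) (hM : ∀ j, s j ≤ M)
    (hb : b ^ 2 = (1 / (n : ℝ)) * ∑ j, (s j) ^ 2) :
    ∑ i : Fin k → Fin n,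
        (∏ ℓ, (s (i ℓ)) ^ 2) *
          (Nat.card {φ : Equiv.Perm (Fin k) // ∀ ℓ, i (φ ℓ) = i ℓ} : ℝ) ≤
      (n : ℝ) * k * ((n : ℝ) * b ^ 2 + (k : ℝ) * M ^ 2) ^ k := by
  have hsum : ∑ j, s j ^ 2 = n * b ^ 2 := by
    rw [hb, ← mul_assoc, mul_one_div_cancel (by positivity), one_mul]
  have hbound := sum_prod_mul_fiberFactorialProd_le (fun j => s j ^ 2) (fun j => sq_nonneg _)
    (M ^ 2) (sq_nonneg M) (fun j => pow_le_pow_left₀ (hs j) (hM j) 2) k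
  simp only [card_stabilizer_eq_fiberFactorialProd, hsum] at hbound ⊢
  have hnk : (1 : ℝ) ≤ n * k :=
    one_le_mul_of_one_le_of_one_le (by exact_mod_cast hn) (by exact_mod_cast hk)
  calc _ ≤ _ := hbound
    _ ≤ _ := le_mul_of_one_le_left (by rw [← hsum]; positivity) hnk

theorem stmt10 (n k : ℕ) (hn : 0 < n) (hk : 0 < k)
    (s : Fin n → ℝ) (hs : ∀ j, 0 ≤ s j)
    (M b : ℝ) (hM : ∀ j, s j ≤ M) (hM' : ∃ j, s j = M)
    (hb : b ^ 2 = (1 / (n : ℝ)) * ∑ j, (s j) ^ 2) :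
    ∑ i : Fin k → Fin n,
        (∏ ℓ, (s (i ℓ)) ^ 2) *
          (Nat.card {φ : Equiv.Perm (Fin k) // ∀ ℓ, i (φ ℓ) = i ℓ} : ℝ) ≤
      (n : ℝ) * k * ((n : ℝ) * b ^ 2 + (k : ℝ) * M ^ 2) ^ k :=
  stmt10_general n k hn hk s hs M b hM hb
end
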